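/- Let H be a Hopf algebra over a field k and let c be a central element of H satisfying: (i) for every finite-dimensional simple left H-module V, c acts as zero on V if and only if V is isomorphic to the trivial module; and (ii) every finite-dimensional left H-module E containing a submodule W such that both W and E/W are isomorphic to the trivial module decomposes as an internal direct sum of W and another submodule. If V is a finite-dimensional left H-module and W ⊆ V is any submodule such that V/W is isomorphic to the trivial module, then there exists a submodule W' ⊆ V with W ∩ W' = 0 and W + W' = V. -/

import Mathlib

universe u

/-- `V` is isomorphic to the trivial `H`-module, i.e. to `k` with action `h • x = ε(h) x`. -/
def IsTrivialRep (k H : Type*) (V : Type*) [Field k] [Ring H] [HopfAlgebra k H]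
    [AddCommGroup V] [Module k V] [Module H V] : Prop :=
  ∃ e : V ≃ₗ[k] k, ∀ (h : H) (v : V), e (h • v) = Coalgebra.counit (R := k) h * e v

/-!
Induction on `dim V`. If `W ≠ 0`, choose a simple submodule `S ≤ W`. By induction `W / S` has a
complement `U / S` in `V / S`; then `W ∩ U = S`, `W + U = V` and `U / S ≅ V / W` is trivial, so
it suffices to complement the simple submodule `S` in `U`. If `c` kills `S`, then `S` is trivial
by (i) and (ii) applies. Otherwise, `c` acts as an `H`-linear endomorphism (it is central) that
kills the trivial simple module `U / S` by (i), so it maps `U` into `S`, and onto `S` by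
simplicity; hence `ker c` is a complement of `S`.
-/

open Module Submodule

section Lattice

variable {α : Type*} [Lattice α] [BoundedOrder α]

theorem isCompl_of_inf_eq_of_sup_eq {S W U X : α} (hSW : S ≤ W) (hWU : W ⊓ U = S)
    (hWU' : Codisjoint W U) (hSX : Disjoint S X) (hSXU : S ⊔ X = U) : IsCompl W X := by
  have hXU : X ≤ U := hSXU ▸ le_sup_right
  have hUWX : U ≤ W ⊔ X := hSXU ▸ sup_le_sup_right hSW X
  refine ⟨disjoint_iff.mpr (eq_bot_iff.mpr ?_), codisjoint_iff_le_sup.mpr ?_⟩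
  · calc W ⊓ X ≤ S ⊓ X := le_inf (hWU ▸ inf_le_inf_left W hXU) inf_le_right
      _ = ⊥ := hSX.eq_bot
  · exact hWU'.top_le.trans (sup_le le_sup_left hUWX)

end Lattice

namespace Submodule

variable {R M : Type*} [Ring R] [AddCommGroup M] [Module R M]

theorem inf_comap_mkQ_eq_and_codisjoint {S W : Submodule R M} (hSW : S ≤ W)
    {U : Submodule R (M ⧸ S)} (hU : IsCompl (W.map S.mkQ) U) :
    W ⊓ U.comap S.mkQ = S ∧ Codisjoint W (U.comap S.mkQ) := by
  have := (comapMkQRelIso S).isCompl_iff.mp hU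
  rw [Set.Ici.isCompl_iff] at this
  simpa [comapMkQRelIso, comap_map_mkQ, sup_eq_right.mpr hSW] using this

theorem disjoint_map_subtype_and_sup_eq {S U : Submodule R M} (hSU : S ≤ U)
    {X : Submodule R U} (hX : IsCompl (S.comap U.subtype) X) :
    Disjoint S (X.map U.subtype) ∧ S ⊔ X.map U.subtype = U := by
  have := (mapIic U).isCompl_iff.mp hX
  rw [Set.Iic.isCompl_iff] at this
  simpa [map_comap_subtype, inf_eq_right.mpr hSU] using this

theorem isCompl_map_subtype_of_isCompl {S W : Submodule R M} (hSW : S ≤ W)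
    {U : Submodule R (M ⧸ S)} (hU : IsCompl (W.map S.mkQ) U)
    {X : Submodule R (U.comap S.mkQ)} (hX : IsCompl (S.comap (U.comap S.mkQ).subtype) X) :
    IsCompl W (X.map (U.comap S.mkQ).subtype) :=
  have hWU := inf_comap_mkQ_eq_and_codisjoint hSW hU
  have hSX := disjoint_map_subtype_and_sup_eq (le_comap_mkQ S U) hX
  isCompl_of_inf_eq_of_sup_eq hSW hWU.1 hWU.2 hSX.1 hSX.2

noncomputable def quotientComapSubtypeEquivOfCodisjoint {W U : Submodule R M}
    (h : Codisjoint W U) : (U ⧸ W.comap U.subtype) ≃ₗ[R] M ⧸ W :=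
  (quotEquivOfEq _ _ (by rw [LinearMap.ker_comp, ker_mkQ])).trans
    ((W.mkQ ∘ₗ U.subtype).quotKerEquivOfSurjective (by
      rw [← LinearMap.range_eq_top, LinearMap.range_comp, range_subtype, map_mkQ_eq_top]
      exact h.eq_top))

theorem isAtom_comap_subtype {S U : Submodule R M} (hS : IsAtom S) (hSU : S ≤ U) :
    IsAtom (S.comap U.subtype) :=
  have := isSimpleModule_iff_isAtom.mpr hS
  isSimpleModule_iff_isAtom.mp (IsSimpleModule.congr (comapSubtypeEquivOfLe hSU))

theorem isCompl_ker_of_isAtom {f : M →ₗ[R] M} {S : Submodule R M} (hS : IsAtom S)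
    (hrange : LinearMap.range f ≤ S) (hS_ker : ¬ S ≤ LinearMap.ker f) :
    IsCompl S (LinearMap.ker f) := by
  have hmap : S.map f = S := (hS.le_iff.mp (LinearMap.map_le_range.trans hrange)).resolve_left
    (mt LinearMap.le_ker_iff_map.mpr hS_ker)
  refine ⟨disjoint_iff.mpr (hS.lt_iff.mp (inf_le_left.lt_of_ne fun h ↦ ?_)), ?_⟩
  · exact hS_ker (inf_eq_left.mp h)
  · rw [codisjoint_iff, ← comap_map_eq, hmap]
    exact LinearMap.range_le_iff_comap.mp hrange

variable (k : Type*) {H V : Type*} [Field k] [Ring H] [AddCommGroup V] [Module k V] [Module H V]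
  [SMul k H] [IsScalarTower k H V] [FiniteDimensional k V]

instance finiteDimensional_of_isScalarTower (S : Submodule H V) : FiniteDimensional k S :=
  Module.Finite.of_injective (S.subtype.restrictScalars k) S.injective_subtype

theorem finrank_quotient_lt {S : Submodule H V} (hS : S ≠ ⊥) :
    finrank k (V ⧸ S) < finrank k V := by
  have hsum := (S.restrictScalars k).finrank_quotient_add_finrank
  have hpos : 0 < finrank k S := finrank_pos_iff.mpr (nontrivial_iff_ne_bot.mpr hS)
  change finrank k (V ⧸ S.restrictScalars k) < _
  change 0 < finrank k (S.restrictScalars k) at hpos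
  omega

end Submodule

theorem IsSimpleModule.of_isScalarTower (R : Type*) {S M : Type*} [Ring R] [Ring S]
    [AddCommGroup M] [Module R M] [Module S M] [SMul R S] [IsScalarTower R S M]
    [IsSimpleModule R M] : IsSimpleModule S M := by
  have := IsSimpleModule.nontrivial R M
  refine { eq_bot_or_eq_top := fun p ↦ ?_ }
  exact (eq_bot_or_eq_top (p.restrictScalars R)).imp (restrictScalars_eq_bot_iff R S M).mp
    (restrictScalars_eq_top_iff R S M).mp

def LinearMap.centralSMul {H V : Type*} [Semiring H] [AddCommMonoid V] [Module H V] (c : H)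
    (hc : ∀ h : H, c * h = h * c) : V →ₗ[H] V where
  toFun v := c • v
  map_add' := smul_add c
  map_smul' h v := by simp only [RingHom.id_apply, smul_smul, hc]

section Hopf

variable (k H : Type u) [Field k] [Ring H] [HopfAlgebra k H]

def ActsByZeroIffTrivial (c : H) : Prop :=
  ∀ (V : Type u) [AddCommGroup V] [Module k V] [Module H V] [IsScalarTower k H V]
    [FiniteDimensional k V] [IsSimpleModule H V], (∀ v : V, c • v = 0) ↔ IsTrivialRep k H V

def TrivialExtensionsSplit : Prop :=
  ∀ (E : Type u) [AddCommGroup E] [Module k E] [Module H E] [IsScalarTower k H E]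
    [FiniteDimensional k E] (W : Submodule H E),
    IsTrivialRep k H W → IsTrivialRep k H (E ⧸ W) →
    ∃ W' : Submodule H E, W ⊓ W' = ⊥ ∧ W ⊔ W' = ⊤

variable {k H}

theorem IsTrivialRep.of_linearEquiv {A B : Type*} [AddCommGroup A] [Module k A] [Module H A]
    [IsScalarTower k H A] [AddCommGroup B] [Module k B] [Module H B] [IsScalarTower k H B]
    (e : A ≃ₗ[H] B) (hB : IsTrivialRep k H B) : IsTrivialRep k H A := by
  obtain ⟨f, hf⟩ := hB
  exact ⟨(e.restrictScalars k).trans f, fun h a ↦ by simp [hf]⟩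

theorem IsTrivialRep.isSimpleModule {A : Type*} [AddCommGroup A] [Module k A] [Module H A]
    [IsScalarTower k H A] (hA : IsTrivialRep k H A) : IsSimpleModule H A := by
  obtain ⟨e, -⟩ := hA
  have := IsSimpleModule.congr e
  exact IsSimpleModule.of_isScalarTower k

variable {c : H} {V : Type u} [AddCommGroup V] [Module k V] [Module H V] [IsScalarTower k H V]
  [FiniteDimensional k V]

theorem exists_isCompl_of_isAtom (hc : ∀ h : H, c * h = h * c)
    (hCasimir : ActsByZeroIffTrivial k H c) (hExt : TrivialExtensionsSplit k H)
    {S : Submodule H V} (hS : IsAtom S) (hquot : IsTrivialRep k H (V ⧸ S)) :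
    ∃ S', IsCompl S S' := by
  have := isSimpleModule_iff_isAtom.mpr hS
  by_cases hcS : ∀ s : S, c • s = 0
  · obtain ⟨S', hinf, hsup⟩ := hExt V S ((hCasimir S).mp hcS) hquot
    exact ⟨S', disjoint_iff.mpr hinf, codisjoint_iff.mpr hsup⟩
  have := hquot.isSimpleModule
  have hcV : ∀ x : V ⧸ S, c • x = 0 := (hCasimir _).mpr hquot
  refine ⟨_, isCompl_ker_of_isAtom hS (f := LinearMap.centralSMul c hc) ?_ fun hle ↦ ?_⟩
  · rintro _ ⟨v, rfl⟩
    exact (Quotient.mk_eq_zero S).mp (hcV (Submodule.Quotient.mk v))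
  · exact hcS fun s ↦ Subtype.ext (hle s.2)

theorem exists_isCompl_of_isTrivialRep_quotient (hc : ∀ h : H, c * h = h * c)
    (hCasimir : ActsByZeroIffTrivial k H c) (hExt : TrivialExtensionsSplit k H)
    (W : Submodule H V) (hquot : IsTrivialRep k H (V ⧸ W)) : ∃ W', IsCompl W W' := by
  suffices ∀ n (V : Type u) [AddCommGroup V] [Module k V] [Module H V] [IsScalarTower k H V]
      [FiniteDimensional k V], finrank k V = n → ∀ W : Submodule H V,
      IsTrivialRep k H (V ⧸ W) → ∃ W', IsCompl W W' from this _ V rfl W hquot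
  intro n
  induction n using Nat.strong_induction_on with | _ n ih => ?_
  intro V _ _ _ _ _ hn W hquot
  have : IsArtinian H V := isArtinian_of_tower k inferInstance
  obtain rfl | ⟨S, hS, hSW⟩ := eq_bot_or_exists_atom_le W
  · exact ⟨⊤, isCompl_bot_top⟩
  obtain ⟨U, hU⟩ := ih _ (hn ▸ finrank_quotient_lt k hS.ne_bot) (V ⧸ S) rfl (W.map S.mkQ)
    (hquot.of_linearEquiv (quotientQuotientEquivQuotient S W hSW))
  set Ub := U.comap S.mkQ
  obtain ⟨hWUb, hcod⟩ := inf_comap_mkQ_eq_and_codisjoint hSW hU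
  have hcomap : S.comap Ub.subtype = W.comap Ub.subtype := by
    rw [← hWUb, comap_inf, comap_subtype_self, inf_top_eq]
  obtain ⟨X, hX⟩ := exists_isCompl_of_isAtom hc hCasimir hExt
    (isAtom_comap_subtype hS (le_comap_mkQ S U))
    (hquot.of_linearEquiv ((quotEquivOfEq _ _ hcomap).trans
      (quotientComapSubtypeEquivOfCodisjoint hcod)))
  exact ⟨_, isCompl_map_subtype_of_isCompl hSW hU hX⟩

end Hopf

/-- under the Casimir hypotheses, any submodule `W` of a finite-dimensional
module `V` with trivial quotient `V ⧸ W` has a complement. -/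
theorem complement_of_trivial_quot (k H : Type u) [Field k] [Ring H]
    [HopfAlgebra k H] (c : H) (hc : ∀ h : H, c * h = h * c)
    (hCasimir : ∀ (V : Type u) [AddCommGroup V] [Module k V] [Module H V]
      [IsScalarTower k H V] [FiniteDimensional k V] [IsSimpleModule H V],
      (∀ v : V, c • v = 0) ↔ IsTrivialRep k H V)
    (hExt : ∀ (E : Type u) [AddCommGroup E] [Module k E] [Module H E]
      [IsScalarTower k H E] [FiniteDimensional k E] (W : Submodule H E),
      IsTrivialRep k H W → IsTrivialRep k H (E ⧸ W) →
      ∃ W' : Submodule H E, W ⊓ W' = ⊥ ∧ W ⊔ W' = ⊤)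
    (V : Type u) [AddCommGroup V] [Module k V] [Module H V] [IsScalarTower k H V]
    [FiniteDimensional k V] (W : Submodule H V) (hquot : IsTrivialRep k H (V ⧸ W)) :
    ∃ W' : Submodule H V, W ⊓ W' = ⊥ ∧ W ⊔ W' = ⊤ := by
  obtain ⟨W', hW'⟩ := exists_isCompl_of_isTrivialRep_quotient hc hCasimir hExt W hquot
  exact ⟨W', hW'.inf_eq_bot, hW'.sup_eq_top⟩
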